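/- arXiv:1902.00105 — 14 statements merged into one kernel-verified Lean document; each statement's English description precedes it below -/
import Mathlib

section
/- Let a, b, c > 0 and let cα, cβ, cγ be real numbers with |cα| < 1. Suppose (u₀, v₀) is a point with u₀ > 0 and v₀ > 0 lying on both conics, i.e. (a²−b²)v₀² + 2b²·cα·u₀v₀ − b²u₀² − 2a²·cβ·v₀ + a² = 0 and (a²−c²)u₀² + 2c²·cα·u₀v₀ − c²v₀² − 2a²·cγ·u₀ + a² = 0. Then u₀² + v₀² − 2·cα·u₀v₀ > 0, and the triple s₁ := a / √(u₀² + v₀² − 2·cα·u₀v₀), s₂ := u₀·s₁, s₃ := v₀·s₁ consists of positive reals and satisfies the three basic P3P constraints: s₁² + s₂² − 2·cγ·s₁s₂ = c², s₁² + s₃² − 2·cβ·s₁s₃ = b², s₂² + s₃² − 2·cα·s₂s₃ = a². -/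
/-- a positive intersection point of the two characteristic conics
of the P3P problem gives rise to a positive solution of the three basic constraints. -/
theorem p3p_conic_intersection_gives_solution
    (a b c cα cβ cγ u₀ v₀ : ℝ)
    (ha : 0 < a) (hb : 0 < b) (hc : 0 < c)
    (hcα : |cα| < 1)
    (hu₀ : 0 < u₀) (hv₀ : 0 < v₀)
    (hC1 : (a^2 - b^2) * v₀^2 + 2 * b^2 * cα * u₀ * v₀ - b^2 * u₀^2
            - 2 * a^2 * cβ * v₀ + a^2 = 0)
    (hC2 : (a^2 - c^2) * u₀^2 + 2 * c^2 * cα * u₀ * v₀ - c^2 * v₀^2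
            - 2 * a^2 * cγ * u₀ + a^2 = 0) :
    0 < u₀^2 + v₀^2 - 2 * cα * u₀ * v₀ ∧
    ∀ s₁ s₂ s₃ : ℝ,
      s₁ = a / Real.sqrt (u₀^2 + v₀^2 - 2 * cα * u₀ * v₀) →
      s₂ = u₀ * s₁ →
      s₃ = v₀ * s₁ →
      0 < s₁ ∧ 0 < s₂ ∧ 0 < s₃ ∧
      s₁^2 + s₂^2 - 2 * cγ * s₁ * s₂ = c^2 ∧
      s₁^2 + s₃^2 - 2 * cβ * s₁ * s₃ = b^2 ∧
      s₂^2 + s₃^2 - 2 * cα * s₂ * s₃ = a^2 := by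
  have habs := abs_lt.mp hcα
  have hQ : 0 < u₀^2 + v₀^2 - 2 * cα * u₀ * v₀ := by nlinarith [sq_nonneg (u₀ - v₀), mul_pos hu₀ hv₀]
  refine ⟨hQ, fun s₁ s₂ s₃ h1 h2 h3 => ?_⟩
  have hsq : Real.sqrt (u₀^2 + v₀^2 - 2 * cα * u₀ * v₀) > 0 := Real.sqrt_pos.mpr hQ
  have hs1 : 0 < s₁ := by rw [h1]; positivity
  have hs1sq : s₁^2 = a^2 / (u₀^2 + v₀^2 - 2 * cα * u₀ * v₀) := by
    rw [h1, div_pow, Real.sq_sqrt hQ.le]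
  have hQne : (u₀^2 + v₀^2 - 2 * cα * u₀ * v₀) ≠ 0 := ne_of_gt hQ
  have hs1Q : s₁^2 * (u₀^2 + v₀^2 - 2 * cα * u₀ * v₀) = a^2 := by
    rw [hs1sq]; field_simp
    exact div_self (ne_of_gt (by linarith))
  refine ⟨hs1, by rw [h2]; positivity, by rw [h3]; positivity, ?_, ?_, ?_⟩
  · subst h2 h3
    have key : a^2 * (1 + u₀^2 - 2 * cγ * u₀) = c^2 * (u₀^2 + v₀^2 - 2 * cα * u₀ * v₀) := by
      linear_combination hC2
    apply mul_right_cancel₀ hQne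
    linear_combination (1 + u₀^2 - 2 * cγ * u₀) * hs1Q + key
  · subst h2 h3
    have key : a^2 * (1 + v₀^2 - 2 * cβ * v₀) = b^2 * (u₀^2 + v₀^2 - 2 * cα * u₀ * v₀) := by
      linear_combination hC1
    apply mul_right_cancel₀ hQne
    linear_combination (1 + v₀^2 - 2 * cβ * v₀) * hs1Q + key
  · subst h2 h3
    linear_combination hs1Q
end

section
/- Let a, b, c > 0 and cα, cβ, cγ ∈ ℝ. If positive reals (s₁, s₂, s₃) satisfy the three basic P3P constraints s₁² + s₂² − 2·cγ·s₁s₂ = c², s₁² + s₃² − 2·cβ·s₁s₃ = b², s₂² + s₃² − 2·cα·s₂s₃ = a², then the point (u, v) := (s₂/s₁, s₃/s₁) satisfies both conic equations: (a²−b²)v² + 2b²·cα·uv − b²u² − 2a²·cβ·v + a² = 0 and (a²−c²)u² + 2c²·cα·uv − c²v² − 2a²·cγ·u + a² = 0. -/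
/-- a positive solution of the three basic P3P constraints gives a
point (u, v) = (s₂/s₁, s₃/s₁) lying on both characteristic conics. -/
theorem p3p_solution_gives_conic_intersection
    (a b c cα cβ cγ s₁ s₂ s₃ u v : ℝ)
    (ha : 0 < a) (hb : 0 < b) (hc : 0 < c)
    (hs₁ : 0 < s₁) (hs₂ : 0 < s₂) (hs₃ : 0 < s₃)
    (h1 : s₁^2 + s₂^2 - 2 * cγ * s₁ * s₂ = c^2)
    (h2 : s₁^2 + s₃^2 - 2 * cβ * s₁ * s₃ = b^2)
    (h3 : s₂^2 + s₃^2 - 2 * cα * s₂ * s₃ = a^2)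
    (hu : u = s₂ / s₁) (hv : v = s₃ / s₁) :
    (a^2 - b^2) * v^2 + 2 * b^2 * cα * u * v - b^2 * u^2
      - 2 * a^2 * cβ * v + a^2 = 0 ∧
    (a^2 - c^2) * u^2 + 2 * c^2 * cα * u * v - c^2 * v^2
      - 2 * a^2 * cγ * u + a^2 = 0 := by
  have hs₁' : s₁ ≠ 0 := ne_of_gt hs₁
  subst hu hv
  constructor
  · field_simp
    linear_combination ((-1) * (s₃^2 - 2 * cβ * s₁ * s₃ + s₁^2)) * h3 +
      ((-1) * (-s₃^2 + 2 * cα * s₂ * s₃ - s₂^2)) * h2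
  · field_simp
    linear_combination ((-1) * (s₂^2 - 2 * cγ * s₁ * s₂ + s₁^2)) * h3 +
      ((-1) * (-s₂^2 + 2 * cα * s₂ * s₃ - s₃^2)) * h1
end

section
/- (Necessity in Theorem 3: side-sharing pair lies on the side-sharing line.) Let a, b, c > 0 and cα, cβ, cγ ∈ ℝ. Suppose (s₁₁, s₂, s₃) and (s₂₁, s₂, s₃) are two solutions of the P3P problem (positive triples satisfying the three basic constraints) with s₁₁ ≠ s₂₁ (a side-sharing pair sharing the side BC). Then cγ·s₂ = cβ·s₃; in particular, both (u₁, v₁) := (s₂/s₁₁, s₃/s₁₁) and (u₂, v₂) := (s₂/s₂₁, s₃/s₂₁) satisfy the side-sharing line equation cγ·u − cβ·v = 0, and moreover s₁₁ + s₂₁ = 2·cγ·s₂ = 2·cβ·s₃. -/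
/-- necessity in Theorem 3: a side-sharing pair of P3P solutions
sharing the side BC lies on the side-sharing line cγ·u − cβ·v = 0. -/
theorem p3p_side_sharing_necessity
    (a b c cα cβ cγ s₁₁ s₂₁ s₂ s₃ : ℝ)
    (ha : 0 < a) (hb : 0 < b) (hc : 0 < c)
    (hs₁₁ : 0 < s₁₁) (hs₂₁ : 0 < s₂₁) (hs₂ : 0 < s₂) (hs₃ : 0 < s₃)
    (h11 : s₁₁^2 + s₂^2 - 2 * cγ * s₁₁ * s₂ = c^2)
    (h12 : s₁₁^2 + s₃^2 - 2 * cβ * s₁₁ * s₃ = b^2)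
    (h13 : s₂^2 + s₃^2 - 2 * cα * s₂ * s₃ = a^2)
    (h21 : s₂₁^2 + s₂^2 - 2 * cγ * s₂₁ * s₂ = c^2)
    (h22 : s₂₁^2 + s₃^2 - 2 * cβ * s₂₁ * s₃ = b^2)
    (h23 : s₂^2 + s₃^2 - 2 * cα * s₂ * s₃ = a^2)
    (hne : s₁₁ ≠ s₂₁) :
    cγ * s₂ = cβ * s₃ ∧
    cγ * (s₂ / s₁₁) - cβ * (s₃ / s₁₁) = 0 ∧
    cγ * (s₂ / s₂₁) - cβ * (s₃ / s₂₁) = 0 ∧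
    s₁₁ + s₂₁ = 2 * cγ * s₂ ∧
    s₁₁ + s₂₁ = 2 * cβ * s₃ := by
  have hd : s₁₁ - s₂₁ ≠ 0 := sub_ne_zero.mpr hne
  have hg : (s₁₁ - s₂₁) * (s₁₁ + s₂₁ - 2 * cγ * s₂) = 0 := by nlinarith [h11, h21]
  have hbb : (s₁₁ - s₂₁) * (s₁₁ + s₂₁ - 2 * cβ * s₃) = 0 := by nlinarith [h12, h22]
  have e1 : s₁₁ + s₂₁ = 2 * cγ * s₂ := by
    have := (mul_eq_zero.mp hg).resolve_left hd; linarith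
  have e2 : s₁₁ + s₂₁ = 2 * cβ * s₃ := by
    have := (mul_eq_zero.mp hbb).resolve_left hd; linarith
  have e3 : cγ * s₂ = cβ * s₃ := by linarith
  refine ⟨e3, ?_, ?_, e1, e2⟩ <;> field_simp <;> linarith [e3]
end

section
/- (Sufficiency in Theorem 3.) Let a, b, c > 0 and cα, cβ, cγ ∈ ℝ with cβ ≠ 0 and cγ ≠ 0. Suppose (s₁₁, s₁₂, s₁₃) and (s₂₁, s₂₂, s₂₃) are two solutions of the P3P problem (positive triples satisfying the three basic constraints) such that cγ·s₁₂ − cβ·s₁₃ = 0 and cγ·s₂₂ − cβ·s₂₃ = 0 (both corresponding points (uᵢ, vᵢ) = (sᵢ₂/sᵢ₁, sᵢ₃/sᵢ₁) lie on the side-sharing line cγ·u − cβ·v = 0). Then s₁₂ = s₂₂ and s₁₃ = s₂₃; i.e. the two solutions form a side-sharing pair with shared side BC. -/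
/-- sufficiency in Theorem 3: two P3P solutions whose associated
points both lie on the side-sharing line cγ·u − cβ·v = 0 form a side-sharing
pair with shared side BC. -/
theorem p3p_side_sharing_sufficiency
    (a b c cα cβ cγ s₁₁ s₁₂ s₁₃ s₂₁ s₂₂ s₂₃ : ℝ)
    (ha : 0 < a) (hb : 0 < b) (hc : 0 < c)
    (hcβ : cβ ≠ 0) (hcγ : cγ ≠ 0)
    (h₁₁ : 0 < s₁₁) (h₁₂ : 0 < s₁₂) (h₁₃ : 0 < s₁₃)
    (h₂₁ : 0 < s₂₁) (h₂₂ : 0 < s₂₂) (h₂₃ : 0 < s₂₃)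
    (e11 : s₁₁^2 + s₁₂^2 - 2 * cγ * s₁₁ * s₁₂ = c^2)
    (e12 : s₁₁^2 + s₁₃^2 - 2 * cβ * s₁₁ * s₁₃ = b^2)
    (e13 : s₁₂^2 + s₁₃^2 - 2 * cα * s₁₂ * s₁₃ = a^2)
    (e21 : s₂₁^2 + s₂₂^2 - 2 * cγ * s₂₁ * s₂₂ = c^2)
    (e22 : s₂₁^2 + s₂₃^2 - 2 * cβ * s₂₁ * s₂₃ = b^2)
    (e23 : s₂₂^2 + s₂₃^2 - 2 * cα * s₂₂ * s₂₃ = a^2)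
    (hline1 : cγ * s₁₂ - cβ * s₁₃ = 0)
    (hline2 : cγ * s₂₂ - cβ * s₂₃ = 0) :
    s₁₂ = s₂₂ ∧ s₁₃ = s₂₃ := by
  have h3 : s₁₃ = cγ / cβ * s₁₂ := by field_simp; linarith
  have h4 : s₂₃ = cγ / cβ * s₂₂ := by field_simp; linarith
  set t := cγ / cβ with ht
  rw [h3] at e13
  rw [h4] at e23
  have k1 : s₁₂ ^ 2 * (1 + t ^ 2 - 2 * cα * t) = a ^ 2 := by linear_combination e13
  have k2 : s₂₂ ^ 2 * (1 + t ^ 2 - 2 * cα * t) = a ^ 2 := by linear_combination e23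
  have hK : (1 + t ^ 2 - 2 * cα * t) ≠ 0 := by
    intro h
    rw [h, mul_zero] at k1
    nlinarith
  have hsq : s₁₂ ^ 2 = s₂₂ ^ 2 := mul_right_cancel₀ hK (k1.trans k2.symm)
  have h12 : s₁₂ = s₂₂ := by nlinarith
  exact ⟨h12, by rw [h3, h4, h12]⟩
end

section
/- (Algebraic construction in Theorem 4.) Let a, b, c > 0 and cα, cβ, cγ ∈ ℝ. Suppose (s₁₁, s₁₂, s₁₃) is a solution of the P3P problem (a positive triple satisfying the three basic constraints) with cγ·s₁₂ = cβ·s₁₃, and set s₂₁ := 2·cγ·s₁₂ − s₁₁ (which also equals 2·cβ·s₁₃ − s₁₁). Then s₂₁² + s₁₂² − 2·cγ·s₂₁s₁₂ = c² and s₂₁² + s₁₃² − 2·cβ·s₂₁s₁₃ = b²; hence, if in addition s₂₁ > 0, the triple (s₂₁, s₁₂, s₁₃) is another solution of the P3P problem, forming a side-sharing pair with (s₁₁, s₁₂, s₁₃) sharing the side BC, and its point (u₂, v₂) = (s₁₂/s₂₁, s₁₃/s₂₁) also satisfies cγ·u − cβ·v = 0. -/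
/-- algebraic construction in Theorem 4: from a P3P solution on
the side-sharing line one constructs s₂₁ := 2·cγ·s₁₂ − s₁₁ which satisfies the
first two constraints; if positive, it gives a second, side-sharing solution. -/
theorem p3p_side_sharing_construction
    (a b c cα cβ cγ s₁₁ s₁₂ s₁₃ s₂₁ : ℝ)
    (ha : 0 < a) (hb : 0 < b) (hc : 0 < c)
    (h₁₁ : 0 < s₁₁) (h₁₂ : 0 < s₁₂) (h₁₃ : 0 < s₁₃)
    (e1 : s₁₁^2 + s₁₂^2 - 2 * cγ * s₁₁ * s₁₂ = c^2)
    (e2 : s₁₁^2 + s₁₃^2 - 2 * cβ * s₁₁ * s₁₃ = b^2)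
    (e3 : s₁₂^2 + s₁₃^2 - 2 * cα * s₁₂ * s₁₃ = a^2)
    (hline : cγ * s₁₂ = cβ * s₁₃)
    (hdef : s₂₁ = 2 * cγ * s₁₂ - s₁₁) :
    s₂₁ = 2 * cβ * s₁₃ - s₁₁ ∧
    s₂₁^2 + s₁₂^2 - 2 * cγ * s₂₁ * s₁₂ = c^2 ∧
    s₂₁^2 + s₁₃^2 - 2 * cβ * s₂₁ * s₁₃ = b^2 ∧
    (0 < s₂₁ →
      (0 < s₂₁ ∧ 0 < s₁₂ ∧ 0 < s₁₃ ∧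
       s₂₁^2 + s₁₂^2 - 2 * cγ * s₂₁ * s₁₂ = c^2 ∧
       s₂₁^2 + s₁₃^2 - 2 * cβ * s₂₁ * s₁₃ = b^2 ∧
       s₁₂^2 + s₁₃^2 - 2 * cα * s₁₂ * s₁₃ = a^2) ∧
      cγ * (s₁₂ / s₂₁) - cβ * (s₁₃ / s₂₁) = 0) := by
  have hc1 : s₂₁^2 + s₁₂^2 - 2 * cγ * s₂₁ * s₁₂ = c^2 := by
    subst hdef; nlinarith [sq_nonneg s₁₁, sq_nonneg s₁₂]
  have hc2 : s₂₁^2 + s₁₃^2 - 2 * cβ * s₂₁ * s₁₃ = b^2 := by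
    subst hdef; nlinarith [sq_nonneg s₁₁, sq_nonneg s₁₃]
  refine ⟨by rw [hdef]; linarith, hc1, hc2, fun hpos => ⟨⟨hpos, h₁₂, h₁₃, hc1, hc2, e3⟩, ?_⟩⟩
  field_simp
  linarith [hline]
end

section
/- (Theorem 5: geometric meaning of a side-sharing pair.) Let O, A, B, C be points of the Euclidean space ℝ³ (EuclideanSpace ℝ (Fin 3)), let t ∈ ℝ with t ≠ 1, and set A' := O + t·(A − O) (a point on the line OA distinct from A). Suppose dist(A', B) = dist(A, B) and dist(A', C) = dist(A, C). Then ⟪A − O, C − B⟫ = 0, i.e. O lies on the plane through A perpendicular to the line BC (the vertical plane through the altitude of the triangle ABC from A when ABC lies in a horizontal plane). Moreover, for every affine isometry φ of ℝ³ with φ(B) = B, φ(C) = C and φ(A') = A, the point O' := φ(O) also satisfies ⟪O' − A, C − B⟫ = 0, i.e. O' lies on the same plane. -/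
open scoped RealInnerProductSpace

/-- Theorem 5: geometric meaning of a side-sharing pair: if
A' = O + t·(A − O) with t ≠ 1 satisfies |A'B| = |AB| and |A'C| = |AC|, then
O lies on the plane through A perpendicular to BC, and so does O' = φ(O) for
every affine isometry φ with φ(B) = B, φ(C) = C, φ(A') = A. -/
theorem p3p_side_sharing_geometric_meaning
    (O A B C : EuclideanSpace ℝ (Fin 3)) (t : ℝ) (ht : t ≠ 1)
    (A' : EuclideanSpace ℝ (Fin 3)) (hA' : A' = O + t • (A - O))
    (hB : dist A' B = dist A B) (hC : dist A' C = dist A C) :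
    ⟪A - O, C - B⟫ = 0 ∧
    ∀ φ : EuclideanSpace ℝ (Fin 3) →ᵃⁱ[ℝ] EuclideanSpace ℝ (Fin 3),
      φ B = B → φ C = C → φ A' = A → ⟪φ O - A, C - B⟫ = 0 := by
  have ht' : t - 1 ≠ 0 := sub_ne_zero.mpr ht
  have expand : ∀ P : EuclideanSpace ℝ (Fin 3), dist A' P = dist A P →
      2 * (t - 1) * ⟪A - O, A - P⟫ + (t - 1) * ((t - 1) * ⟪A - O, A - O⟫) = 0 := by
    intro P hP
    have h1 : ‖A' - P‖ = ‖A - P‖ := by simpa [dist_eq_norm] using hP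
    have h2 : ⟪A' - P, A' - P⟫ = ⟪A - P, A - P⟫ := by
      rw [real_inner_self_eq_norm_sq, real_inner_self_eq_norm_sq, h1]
    have hrw : A' - P = (A - P) + (t - 1) • (A - O) := by rw [hA']; module
    rw [hrw, inner_add_add_self] at h2
    simp only [real_inner_smul_left, real_inner_smul_right] at h2
    rw [real_inner_comm (A - O) (A - P)] at h2
    linarith
  have hB2 := expand B hB
  have hC2 := expand C hC
  have hdiff : ⟪A - O, A - B⟫ - ⟪A - O, A - C⟫ = 0 := by
    have h : (t - 1) * (⟪A - O, A - B⟫ - ⟪A - O, A - C⟫) = 0 := by linarith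
    rcases mul_eq_zero.mp h with h | h
    · exact absurd h ht'
    · exact h
  have hmain : ⟪A - O, C - B⟫ = 0 := by
    have hCB : (C - B : EuclideanSpace ℝ (Fin 3)) = (A - B) - (A - C) := by module
    rw [hCB, inner_sub_right]
    linarith
  refine ⟨hmain, fun φ hφB hφC hφA' => ?_⟩
  have h1 : φ O - A = φ.linearIsometry (O - A') := by
    rw [show φ.linearIsometry (O - A') = φ.linearIsometry (O -ᵥ A') from rfl,
      φ.map_vsub, hφA', vsub_eq_sub]
  have h2 : (C - B : EuclideanSpace ℝ (Fin 3)) = φ.linearIsometry (C - B) := by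
    rw [show φ.linearIsometry (C - B) = φ.linearIsometry (C -ᵥ B) from rfl,
      φ.map_vsub, hφB, hφC, vsub_eq_sub]
  rw [h1, h2, φ.linearIsometry.inner_map_map]
  have hOA' : O - A' = (-t) • (A - O) := by rw [hA']; module
  rw [hOA', real_inner_smul_left, hmain, mul_zero]
end

section
/- (Necessity in Theorem 6: point-sharing pair lies on the point-sharing line.) Let a, b, c > 0 and cα, cβ, cγ ∈ ℝ with cβ ≠ 0 and cγ ≠ 0. Suppose (s₁₁, s₁₂, s₁₃) and (s₁₁, s₂₂, s₂₃) are two solutions of the P3P problem (positive triples satisfying the three basic constraints) with s₁₂ ≠ s₂₂ and s₁₃ ≠ s₂₃ (a point-sharing pair sharing the point A). Then both triples satisfy the point-sharing line equation: (a²+b²−c²)·cβ·s₁₂ + (a²+c²−b²)·cγ·s₁₃ = 2a²·cβ·cγ·s₁₁ and (a²+b²−c²)·cβ·s₂₂ + (a²+c²−b²)·cγ·s₂₃ = 2a²·cβ·cγ·s₁₁. Moreover s₂₂ = 2·cγ·s₁₁ − s₁₂ and s₂₃ = 2·cβ·s₁₁ − s₁₃. -/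
/-- necessity in Theorem 6: a point-sharing pair of P3P solutions
sharing the point A lies on the point-sharing line
(a²+b²−c²)·cβ·u + (a²+c²−b²)·cγ·v = 2a²·cβ·cγ. -/
theorem p3p_point_sharing_necessity
    (a b c cα cβ cγ s₁₁ s₁₂ s₁₃ s₂₂ s₂₃ : ℝ)
    (ha : 0 < a) (hb : 0 < b) (hc : 0 < c)
    (hcβ : cβ ≠ 0) (hcγ : cγ ≠ 0)
    (h₁₁ : 0 < s₁₁) (h₁₂ : 0 < s₁₂) (h₁₃ : 0 < s₁₃)
    (h₂₂ : 0 < s₂₂) (h₂₃ : 0 < s₂₃)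
    (e11 : s₁₁^2 + s₁₂^2 - 2 * cγ * s₁₁ * s₁₂ = c^2)
    (e12 : s₁₁^2 + s₁₃^2 - 2 * cβ * s₁₁ * s₁₃ = b^2)
    (e13 : s₁₂^2 + s₁₃^2 - 2 * cα * s₁₂ * s₁₃ = a^2)
    (e21 : s₁₁^2 + s₂₂^2 - 2 * cγ * s₁₁ * s₂₂ = c^2)
    (e22 : s₁₁^2 + s₂₃^2 - 2 * cβ * s₁₁ * s₂₃ = b^2)
    (e23 : s₂₂^2 + s₂₃^2 - 2 * cα * s₂₂ * s₂₃ = a^2)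
    (hne₂ : s₁₂ ≠ s₂₂) (hne₃ : s₁₃ ≠ s₂₃) :
    (a^2 + b^2 - c^2) * cβ * s₁₂ + (a^2 + c^2 - b^2) * cγ * s₁₃
      = 2 * a^2 * cβ * cγ * s₁₁ ∧
    (a^2 + b^2 - c^2) * cβ * s₂₂ + (a^2 + c^2 - b^2) * cγ * s₂₃
      = 2 * a^2 * cβ * cγ * s₁₁ ∧
    s₂₂ = 2 * cγ * s₁₁ - s₁₂ ∧
    s₂₃ = 2 * cβ * s₁₁ - s₁₃ := by
  -- s₂₂ = 2cγs₁₁ − s₁₂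
  have h2 : s₂₂ = 2 * cγ * s₁₁ - s₁₂ := by
    have hf : (s₁₂ - s₂₂) * (s₁₂ + s₂₂ - 2 * cγ * s₁₁) = 0 := by
      linear_combination e11 - e21
    rcases mul_eq_zero.mp hf with h | h
    · exact absurd (by linarith) hne₂
    · linarith
  have h3 : s₂₃ = 2 * cβ * s₁₁ - s₁₃ := by
    have hf : (s₁₃ - s₂₃) * (s₁₃ + s₂₃ - 2 * cβ * s₁₁) = 0 := by
      linear_combination e12 - e22
    rcases mul_eq_zero.mp hf with h | h
    · exact absurd (by linarith) hne₃
    · linarith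
  subst h2 h3
  have hs : s₁₁ ≠ 0 := ne_of_gt h₁₁
  have H : 2 * s₁₁ * ((a^2 + b^2 - c^2) * cβ * s₁₂ + (a^2 + c^2 - b^2) * cγ * s₁₃
      - 2 * a^2 * cβ * cγ * s₁₁) = 0 := by
    linear_combination (2*cβ*s₁₁*s₁₂ - 2*cγ*s₁₁*s₁₃) * e11
      + (2*cγ*s₁₁*s₁₃ - 2*cβ*s₁₁*s₁₂) * e12
      + (4*cβ*cγ*s₁₁^2 - 2*cγ*s₁₁*s₁₃ - 2*cβ*s₁₁*s₁₂ + s₁₂*s₁₃) * e13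
      - s₁₂*s₁₃ * e23
  have hL : (a^2 + b^2 - c^2) * cβ * s₁₂ + (a^2 + c^2 - b^2) * cγ * s₁₃
      = 2 * a^2 * cβ * cγ * s₁₁ := by
    have := mul_eq_zero.mp H
    rcases this with h | h
    · exact absurd (by linarith) hs
    · linarith
  refine ⟨hL, ?_, rfl, rfl⟩
  linear_combination -hL
end

section
/- (Key identity, equation (19) in the proof of Theorem 6.) Let a, b, c > 0 and cα, cβ, cγ ∈ ℝ. Suppose (s₁₁, s₁₂, s₁₃) is a solution of the P3P problem (a positive triple satisfying the three basic constraints), and set s₂₂ := 2·cγ·s₁₁ − s₁₂ and s₂₃ := 2·cβ·s₁₁ − s₁₃. Then s₁₂·s₁₃·(s₂₂² + s₂₃² − 2·cα·s₂₂·s₂₃ − a²) = −2·s₁₁·((a²+b²−c²)·cβ·s₁₂ + (a²+c²−b²)·cγ·s₁₃ − 2a²·cβ·cγ·s₁₁). In particular, the reflected triple (s₁₁, s₂₂, s₂₃) satisfies the third basic constraint s₂₂² + s₂₃² − 2·cα·s₂₂·s₂₃ = a² if and only if (s₁₂, s₁₃) satisfies the point-sharing line equation (a²+b²−c²)·cβ·s₁₂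 + (a²+c²−b²)·cγ·s₁₃ = 2a²·cβ·cγ·s₁₁. -/
/-- key identity, equation (19) in the proof of Theorem 6: the
defect of the reflected triple (s₁₁, s₂₂, s₂₃) in the third constraint is
proportional to the defect of (s₁₂, s₁₃) in the point-sharing line equation. -/
theorem p3p_point_sharing_key_identity
    (a b c cα cβ cγ s₁₁ s₁₂ s₁₃ s₂₂ s₂₃ : ℝ)
    (ha : 0 < a) (hb : 0 < b) (hc : 0 < c)
    (h₁₁ : 0 < s₁₁) (h₁₂ : 0 < s₁₂) (h₁₃ : 0 < s₁₃)
    (e1 : s₁₁^2 + s₁₂^2 - 2 * cγ * s₁₁ * s₁₂ = c^2)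
    (e2 : s₁₁^2 + s₁₃^2 - 2 * cβ * s₁₁ * s₁₃ = b^2)
    (e3 : s₁₂^2 + s₁₃^2 - 2 * cα * s₁₂ * s₁₃ = a^2)
    (hdef₂ : s₂₂ = 2 * cγ * s₁₁ - s₁₂)
    (hdef₃ : s₂₃ = 2 * cβ * s₁₁ - s₁₃) :
    s₁₂ * s₁₃ * (s₂₂^2 + s₂₃^2 - 2 * cα * s₂₂ * s₂₃ - a^2)
      = -2 * s₁₁ * ((a^2 + b^2 - c^2) * cβ * s₁₂ + (a^2 + c^2 - b^2) * cγ * s₁₃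
          - 2 * a^2 * cβ * cγ * s₁₁) ∧
    (s₂₂^2 + s₂₃^2 - 2 * cα * s₂₂ * s₂₃ = a^2 ↔
      (a^2 + b^2 - c^2) * cβ * s₁₂ + (a^2 + c^2 - b^2) * cγ * s₁₃
        = 2 * a^2 * cβ * cγ * s₁₁) := by
  have h1 : s₁₁ ≠ 0 := h₁₁.ne'
  have h2 : s₁₂ ≠ 0 := h₁₂.ne'
  have h3 : s₁₃ ≠ 0 := h₁₃.ne'
  have hca : cα = (s₁₂^2 + s₁₃^2 - a^2) / (2 * s₁₂ * s₁₃) := by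
    field_simp; linarith
  have hcb : cβ = (s₁₁^2 + s₁₃^2 - b^2) / (2 * s₁₁ * s₁₃) := by
    field_simp; linarith
  have hcg : cγ = (s₁₁^2 + s₁₂^2 - c^2) / (2 * s₁₁ * s₁₂) := by
    field_simp; linarith
  have key : s₁₂ * s₁₃ * (s₂₂^2 + s₂₃^2 - 2 * cα * s₂₂ * s₂₃ - a^2)
      = -2 * s₁₁ * ((a^2 + b^2 - c^2) * cβ * s₁₂ + (a^2 + c^2 - b^2) * cγ * s₁₃
          - 2 * a^2 * cβ * cγ * s₁₁) := by
    subst hdef₂ hdef₃ hca hcb hcg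
    field_simp
    ring
  refine ⟨key, ?_⟩
  constructor
  · intro h
    have hk := key
    rw [h] at hk
    simp only [sub_self, mul_zero] at hk
    have h' : (a^2 + b^2 - c^2) * cβ * s₁₂ + (a^2 + c^2 - b^2) * cγ * s₁₃
        - 2 * a^2 * cβ * cγ * s₁₁ = 0 := by
      exact (mul_eq_zero.mp hk.symm).resolve_left (by
        intro hz
        rcases mul_eq_zero.mp hz with hz | hz
        · norm_num at hz
        · exact h1 hz)
    linarith
  · intro h
    have : s₁₂ * s₁₃ * (s₂₂^2 + s₂₃^2 - 2 * cα * s₂₂ * s₂₃ - a^2) = 0 := by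
      rw [key, h]; ring
    have h0 : s₂₂^2 + s₂₃^2 - 2 * cα * s₂₂ * s₂₃ - a^2 = 0 := by
      rcases mul_eq_zero.mp this with h' | h'
      · exact absurd h' (mul_ne_zero h2 h3)
      · exact h'
    linarith
end

section
/- (Sufficiency in Theorem 6.) Let a, b, c > 0 and cα, cβ, cγ ∈ ℝ with cβ ≠ 0, cγ ≠ 0, a² + b² − c² ≠ 0, and b²·(a²+c²−b²)²·cγ² ≠ c²·(a²+b²−c²)²·cβ². Suppose (s₁₁, s₁₂, s₁₃) and (s₂₁, s₂₂, s₂₃) are two solutions of the P3P problem (positive triples satisfying the three basic constraints) whose associated points (u₁, v₁) = (s₁₂/s₁₁, s₁₃/s₁₁) and (u₂, v₂) = (s₂₂/s₂₁, s₂₃/s₂₁) are distinct and both satisfy the point-sharing line equation (a²+b²−c²)·cβ·u + (a²+c²−b²)·cγ·v = 2a²·cβ·cγ. Then s₁₁ = s₂₁, i.e. the two solutions form a point-sharing pair with shared point A. -/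
/-- sufficiency in Theorem 6: two P3P solutions whose distinct
associated points both lie on the point-sharing line form a point-sharing pair
with shared point A, i.e. they have the same first component. -/
theorem p3p_point_sharing_sufficiency
    (a b c cα cβ cγ s₁₁ s₁₂ s₁₃ s₂₁ s₂₂ s₂₃ : ℝ)
    (ha : 0 < a) (hb : 0 < b) (hc : 0 < c)
    (hcβ : cβ ≠ 0) (hcγ : cγ ≠ 0)
    (habc : a^2 + b^2 - c^2 ≠ 0)
    (hN : b^2 * (a^2 + c^2 - b^2)^2 * cγ^2 ≠ c^2 * (a^2 + b^2 - c^2)^2 * cβ^2)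
    (h₁₁ : 0 < s₁₁) (h₁₂ : 0 < s₁₂) (h₁₃ : 0 < s₁₃)
    (h₂₁ : 0 < s₂₁) (h₂₂ : 0 < s₂₂) (h₂₃ : 0 < s₂₃)
    (e11 : s₁₁^2 + s₁₂^2 - 2 * cγ * s₁₁ * s₁₂ = c^2)
    (e12 : s₁₁^2 + s₁₃^2 - 2 * cβ * s₁₁ * s₁₃ = b^2)
    (e13 : s₁₂^2 + s₁₃^2 - 2 * cα * s₁₂ * s₁₃ = a^2)
    (e21 : s₂₁^2 + s₂₂^2 - 2 * cγ * s₂₁ * s₂₂ = c^2)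
    (e22 : s₂₁^2 + s₂₃^2 - 2 * cβ * s₂₁ * s₂₃ = b^2)
    (e23 : s₂₂^2 + s₂₃^2 - 2 * cα * s₂₂ * s₂₃ = a^2)
    (hne : (s₁₂ / s₁₁, s₁₃ / s₁₁) ≠ (s₂₂ / s₂₁, s₂₃ / s₂₁))
    (hline1 : (a^2 + b^2 - c^2) * cβ * (s₁₂ / s₁₁) + (a^2 + c^2 - b^2) * cγ * (s₁₃ / s₁₁)
      = 2 * a^2 * cβ * cγ)
    (hline2 : (a^2 + b^2 - c^2) * cβ * (s₂₂ / s₂₁) + (a^2 + c^2 - b^2) * cγ * (s₂₃ / s₂₁)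
      = 2 * a^2 * cβ * cγ) :
    s₁₁ = s₂₁ := by
  have h11 : s₁₁ ≠ 0 := h₁₁.ne'
  have h21 : s₂₁ ≠ 0 := h₂₁.ne'
  -- cleared line equations
  have hl1 : (a^2+b^2-c^2)*cβ*s₁₂ + (a^2+c^2-b^2)*cγ*s₁₃ = 2*a^2*cβ*cγ*s₁₁ := by
    field_simp at hline1; linarith
  have hl2 : (a^2+b^2-c^2)*cβ*s₂₂ + (a^2+c^2-b^2)*cγ*s₂₃ = 2*a^2*cβ*cγ*s₂₁ := by
    field_simp at hline2; linarith
  -- conic relating the two quadratics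
  have hC1 : b^2*(s₁₁^2 + s₁₂^2 - 2*cγ*s₁₁*s₁₂) = c^2*(s₁₁^2 + s₁₃^2 - 2*cβ*s₁₁*s₁₃) := by
    rw [e11, e12]; ring
  have hC2 : b^2*(s₂₁^2 + s₂₂^2 - 2*cγ*s₂₁*s₂₂) = c^2*(s₂₁^2 + s₂₃^2 - 2*cβ*s₂₁*s₂₃) := by
    rw [e21, e22]; ring
  -- key quadratic identity on the line
  have hkey : (b^2*(a^2+c^2-b^2)^2*cγ^2 - c^2*(a^2+b^2-c^2)^2*cβ^2)
      * (s₁₃*s₂₁ - s₂₃*s₁₁) * (s₁₃*s₂₁ + s₂₃*s₁₁ - 2*cβ*s₁₁*s₂₁) = 0 := by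
    linear_combination ((a^2+b^2-c^2)*cβ)^2*s₂₁^2 * hC1
      - ((a^2+b^2-c^2)*cβ)^2*s₁₁^2 * hC2
      - b^2*s₂₁^2*(2*a^2*cβ*cγ*s₁₁ - (a^2+c^2-b^2)*cγ*s₁₃ + (a^2+b^2-c^2)*cβ*s₁₂
          - 2*cγ*(a^2+b^2-c^2)*cβ*s₁₁) * hl1
      + b^2*s₁₁^2*(2*a^2*cβ*cγ*s₂₁ - (a^2+c^2-b^2)*cγ*s₂₃ + (a^2+b^2-c^2)*cβ*s₂₂
          - 2*cγ*(a^2+b^2-c^2)*cβ*s₂₁) * hl2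
  have hΔ : (b^2*(a^2+c^2-b^2)^2*cγ^2 - c^2*(a^2+b^2-c^2)^2*cβ^2) ≠ 0 := sub_ne_zero.mpr hN
  have hv : s₁₃*s₂₁ - s₂₃*s₁₁ ≠ 0 := by
    intro h0
    apply hne
    have hv' : s₁₃/s₁₁ = s₂₃/s₂₁ := by
      rw [div_eq_div_iff h11 h21]; linarith
    have hu : (a^2+b^2-c^2)*cβ*(s₁₂*s₂₁ - s₂₂*s₁₁) = 0 := by
      linear_combination s₂₁*hl1 - s₁₁*hl2 - cγ*(a^2+c^2-b^2)*h0
    have hu' : s₁₂*s₂₁ - s₂₂*s₁₁ = 0 := by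
      rcases mul_eq_zero.mp hu with h | h
      · exact absurd h (mul_ne_zero habc hcβ)
      · exact h
    have : s₁₂/s₁₁ = s₂₂/s₂₁ := by rw [div_eq_div_iff h11 h21]; linarith
    exact Prod.ext this hv'
  have hsum : s₁₃*s₂₁ + s₂₃*s₁₁ - 2*cβ*s₁₁*s₂₁ = 0 := by
    rcases mul_eq_zero.mp hkey with h | h
    · rcases mul_eq_zero.mp h with h' | h'
      · exact absurd h' hΔ
      · exact absurd h' hv
    · exact h
  -- finish
  have hA1 : s₁₁^2*s₂₁ - s₁₁*s₁₃*s₂₃ = b^2*s₂₁ := by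
    linear_combination s₂₁*e12 - s₁₃*hsum
  have hA2 : s₂₁^2*s₁₁ - s₂₁*s₁₃*s₂₃ = b^2*s₁₁ := by
    linear_combination s₁₁*e22 - s₂₃*hsum
  have hsq : b^2*(s₂₁^2 - s₁₁^2) = 0 := by
    linear_combination s₁₁*hA2 - s₂₁*hA1
  have hb2 : s₁₁^2 = s₂₁^2 := by
    have : b^2 ≠ 0 := pow_ne_zero 2 hb.ne'
    have := (mul_eq_zero.mp hsq).resolve_left this
    linarith
  have hpos : 0 < s₁₁ + s₂₁ := by linarith
  have : (s₁₁ - s₂₁) * (s₁₁ + s₂₁) = 0 := by linear_combination hb2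
  rcases mul_eq_zero.mp this with h | h
  · linarith
  · linarith
end

section
/- (Theorem 7: construction of the point-sharing companion solution.) Let a, b, c > 0 and cα, cβ, cγ ∈ ℝ with cβ ≠ 0 and cγ ≠ 0. Suppose (s₁₁, s₁₂, s₁₃) is a solution of the P3P problem (a positive triple satisfying the three basic constraints) satisfying the point-sharing line equation (a²+b²−c²)·cβ·s₁₂ + (a²+c²−b²)·cγ·s₁₃ = 2a²·cβ·cγ·s₁₁. Set s₂₂ := 2·cγ·s₁₁ − s₁₂ and s₂₃ := 2·cβ·s₁₁ − s₁₃. Then: (i) the triple (s₁₁, s₂₂, s₂₃) satisfies all three basic constraints s₁₁² + s₂₂² − 2·cγ·s₁₁s₂₂ = c², s₁₁² + s₂₃² − 2·cβ·s₁₁s₂₃ = b², s₂₂² + s₂₃² − 2·cα·s₂₂s₂₃ = a²; (ii) it also satisfies the point-sharing line equation (a²+b²−c²)·cβ·s₂₂ + (a²+c²−b²)·cγ·s₂₃ = 2a²·cβ·cγ·s₁₁; (iii) s₁₂·s₂₂ = s₁₁² − c² and s₁₃·s₂₃ = s₁₁² − b², so s₂₂ > 0 if and only if s₁₁ > c, and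 s₂₃ > 0 if and only if s₁₁ > b; hence if s₁₁ > b and s₁₁ > c, then (s₁₁, s₂₂, s₂₃) is another solution of the P3P problem sharing the point A with (s₁₁, s₁₂, s₁₃). -/
/-- Theorem 7: construction of the point-sharing companion
solution: from a P3P solution on the point-sharing line, the reflected triple
(s₁₁, 2·cγ·s₁₁ − s₁₂, 2·cβ·s₁₁ − s₁₃) satisfies all three constraints, lies on
the point-sharing line, and is positive exactly when s₁₁ > b and s₁₁ > c. -/
theorem p3p_point_sharing_construction
    (a b c cα cβ cγ s₁₁ s₁₂ s₁₃ s₂₂ s₂₃ : ℝ)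
    (ha : 0 < a) (hb : 0 < b) (hc : 0 < c)
    (hcβ : cβ ≠ 0) (hcγ : cγ ≠ 0)
    (h₁₁ : 0 < s₁₁) (h₁₂ : 0 < s₁₂) (h₁₃ : 0 < s₁₃)
    (e1 : s₁₁^2 + s₁₂^2 - 2 * cγ * s₁₁ * s₁₂ = c^2)
    (e2 : s₁₁^2 + s₁₃^2 - 2 * cβ * s₁₁ * s₁₃ = b^2)
    (e3 : s₁₂^2 + s₁₃^2 - 2 * cα * s₁₂ * s₁₃ = a^2)
    (hline : (a^2 + b^2 - c^2) * cβ * s₁₂ + (a^2 + c^2 - b^2) * cγ * s₁₃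
      = 2 * a^2 * cβ * cγ * s₁₁)
    (hdef₂ : s₂₂ = 2 * cγ * s₁₁ - s₁₂)
    (hdef₃ : s₂₃ = 2 * cβ * s₁₁ - s₁₃) :
    (s₁₁^2 + s₂₂^2 - 2 * cγ * s₁₁ * s₂₂ = c^2 ∧
     s₁₁^2 + s₂₃^2 - 2 * cβ * s₁₁ * s₂₃ = b^2 ∧
     s₂₂^2 + s₂₃^2 - 2 * cα * s₂₂ * s₂₃ = a^2) ∧
    ((a^2 + b^2 - c^2) * cβ * s₂₂ + (a^2 + c^2 - b^2) * cγ * s₂₃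
      = 2 * a^2 * cβ * cγ * s₁₁) ∧
    (s₁₂ * s₂₂ = s₁₁^2 - c^2 ∧ s₁₃ * s₂₃ = s₁₁^2 - b^2 ∧
     (0 < s₂₂ ↔ c < s₁₁) ∧ (0 < s₂₃ ↔ b < s₁₁)) ∧
    (b < s₁₁ → c < s₁₁ →
      0 < s₁₁ ∧ 0 < s₂₂ ∧ 0 < s₂₃ ∧
      s₁₁^2 + s₂₂^2 - 2 * cγ * s₁₁ * s₂₂ = c^2 ∧
      s₁₁^2 + s₂₃^2 - 2 * cβ * s₁₁ * s₂₃ = b^2 ∧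
      s₂₂^2 + s₂₃^2 - 2 * cα * s₂₂ * s₂₃ = a^2) := by
  subst hdef₂ hdef₃
  have hu := h₁₂.ne'
  have hv := h₁₃.ne'
  have g1 : s₁₁^2 + (2 * cγ * s₁₁ - s₁₂)^2 - 2 * cγ * s₁₁ * (2 * cγ * s₁₁ - s₁₂) = c^2 := by
    linear_combination e1
  have g2 : s₁₁^2 + (2 * cβ * s₁₁ - s₁₃)^2 - 2 * cβ * s₁₁ * (2 * cβ * s₁₁ - s₁₃) = b^2 := by
    linear_combination e2
  have g3 : (2 * cγ * s₁₁ - s₁₂)^2 + (2 * cβ * s₁₁ - s₁₃)^2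
      - 2 * cα * (2 * cγ * s₁₁ - s₁₂) * (2 * cβ * s₁₁ - s₁₃) = a^2 := by
    have key : s₁₂ * s₁₃ * ((2 * cγ * s₁₁ - s₁₂)^2 + (2 * cβ * s₁₁ - s₁₃)^2
        - 2 * cα * (2 * cγ * s₁₁ - s₁₂) * (2 * cβ * s₁₁ - s₁₃)) = s₁₂ * s₁₃ * a^2 := by
      linear_combination (2 * s₁₁ * (cβ * s₁₂ - cγ * s₁₃)) * e1 +
        (2 * s₁₁ * (cγ * s₁₃ - cβ * s₁₂)) * e2 +
        (s₁₂ * s₁₃ + 2 * s₁₁ * (- cβ * s₁₂ - cγ * s₁₃ + 2 * cβ * cγ * s₁₁)) * e3 +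
        (- 2 * s₁₁) * hline
    have hne : s₁₂ * s₁₃ ≠ 0 := mul_ne_zero hu hv
    exact mul_left_cancel₀ hne key
  have p1 : s₁₂ * (2 * cγ * s₁₁ - s₁₂) = s₁₁^2 - c^2 := by linear_combination -e1
  have p2 : s₁₃ * (2 * cβ * s₁₁ - s₁₃) = s₁₁^2 - b^2 := by linear_combination -e2
  have iff1 : 0 < 2 * cγ * s₁₁ - s₁₂ ↔ c < s₁₁ := by
    constructor
    · intro h
      have : 0 < s₁₁^2 - c^2 := p1 ▸ mul_pos h₁₂ h
      nlinarith
    · intro h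
      have h0 : 0 < s₁₁^2 - c^2 := by nlinarith
      nlinarith [p1]
  have iff2 : 0 < 2 * cβ * s₁₁ - s₁₃ ↔ b < s₁₁ := by
    constructor
    · intro h
      have : 0 < s₁₁^2 - b^2 := p2 ▸ mul_pos h₁₃ h
      nlinarith
    · intro h
      have h0 : 0 < s₁₁^2 - b^2 := by nlinarith
      nlinarith [p2]
  refine ⟨⟨g1, g2, g3⟩, ?_, ⟨p1, p2, iff1, iff2⟩, fun hbs hcs =>
    ⟨h₁₁, iff1.mpr hcs, iff2.mpr hbs, g1, g2, g3⟩⟩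
  linear_combination -hline
end

section
/- (Factorization identity, equation (27) in Theorem 9.) Let a, b, c, cα, cβ, cγ ∈ ℝ and define the difference polynomial E(u,v) := (a²+b²−c²)u² + 2(c²−b²)·cα·uv − (a²−b²+c²)v² − 2a²·cγ·u + 2a²·cβ·v. If 2(b²−c²)·cα·cβ·cγ = cβ²·(a²+b²−c²) − cγ²·(a²+c²−b²), then for all real u, v: cβ·cγ·E(u,v) = (cγ·u − cβ·v)·((a²+b²−c²)·cβ·u + (a²+c²−b²)·cγ·v − 2a²·cβ·cγ); i.e. E factors into the product of the side-sharing line and the point-sharing line. -/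
/-- factorization identity, equation (27) in Theorem 9: under the
cos α relation (26), the difference E = C2 − C1 of the two characteristic conics
factors into the product of the side-sharing line and the point-sharing line. -/
theorem p3p_difference_conic_factorization
    (a b c cα cβ cγ : ℝ)
    (hrel : 2 * (b^2 - c^2) * cα * cβ * cγ
      = cβ^2 * (a^2 + b^2 - c^2) - cγ^2 * (a^2 + c^2 - b^2)) :
    ∀ u v : ℝ,
      cβ * cγ * ((a^2 + b^2 - c^2) * u^2 + 2 * (c^2 - b^2) * cα * u * v
          - (a^2 - b^2 + c^2) * v^2 - 2 * a^2 * cγ * u + 2 * a^2 * cβ * v)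
        = (cγ * u - cβ * v) *
          ((a^2 + b^2 - c^2) * cβ * u + (a^2 + c^2 - b^2) * cγ * v
            - 2 * a^2 * cβ * cγ) := by
  intro u v
  linear_combination (-(u*v)) * hrel
end

section
/- (Equation (26) in Theorem 9: a side-sharing solution forces the cos α relation.) Let a, b, c > 0 and cα, cβ, cγ ∈ ℝ. Suppose (u₀, v₀) with u₀ > 0 and v₀ > 0 satisfies both conic equations C1(u₀,v₀) = 0 and C2(u₀,v₀) = 0 and lies on the side-sharing line, i.e. cγ·u₀ − cβ·v₀ = 0. Then 2(b²−c²)·cα·cβ·cγ = cβ²·(a²+b²−c²) − cγ²·(a²+c²−b²). -/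
/-- equation (26) in Theorem 9: a positive intersection point of
the two characteristic conics lying on the side-sharing line forces the cos α
relation 2(b²−c²)·cα·cβ·cγ = cβ²·(a²+b²−c²) − cγ²·(a²+c²−b²). -/
theorem p3p_side_sharing_forces_cos_alpha_relation
    (a b c cα cβ cγ u₀ v₀ : ℝ)
    (ha : 0 < a) (hb : 0 < b) (hc : 0 < c)
    (hu₀ : 0 < u₀) (hv₀ : 0 < v₀)
    (hC1 : (a^2 - b^2) * v₀^2 + 2 * b^2 * cα * u₀ * v₀ - b^2 * u₀^2
            - 2 * a^2 * cβ * v₀ + a^2 = 0)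
    (hC2 : (a^2 - c^2) * u₀^2 + 2 * c^2 * cα * u₀ * v₀ - c^2 * v₀^2
            - 2 * a^2 * cγ * u₀ + a^2 = 0)
    (hline : cγ * u₀ - cβ * v₀ = 0) :
    2 * (b^2 - c^2) * cα * cβ * cγ
      = cβ^2 * (a^2 + b^2 - c^2) - cγ^2 * (a^2 + c^2 - b^2) := by
  have hv : v₀ ≠ 0 := ne_of_gt hv₀
  have key : (2 * (b^2 - c^2) * cα * cβ * cγ
      - (cβ^2 * (a^2 + b^2 - c^2) - cγ^2 * (a^2 + c^2 - b^2))) * v₀^2 = 0 := by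
    linear_combination cγ^2 * hC1 - cγ^2 * hC2
      + ((a^2 + b^2 - c^2) * (cβ * v₀ + cγ * u₀)
          - 2 * (b^2 - c^2) * cα * cγ * v₀ - 2 * a^2 * cγ^2) * hline
  rcases mul_eq_zero.mp key with h | h
  · linarith
  · exact absurd h (pow_ne_zero 2 hv)
end

section
/- (Equation (29) in Theorem 9: a point-sharing solution forces the cos α relation.) Let a, b, c > 0 and cα, cβ, cγ ∈ ℝ. Suppose (u₀, v₀) with u₀ > 0 and v₀ > 0 satisfies both conic equations C1(u₀,v₀) = 0 and C2(u₀,v₀) = 0 and lies on the point-sharing line, i.e. (a²+b²−c²)·cβ·u₀ + (a²+c²−b²)·cγ·v₀ = 2a²·cβ·cγ. Then 2(b²−c²)·cα·cβ·cγ = cβ²·(a²+b²−c²) − cγ²·(a²+c²−b²). -/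
/-- equation (29) in Theorem 9: a positive intersection point of
the two characteristic conics lying on the point-sharing line forces the cos α
relation 2(b²−c²)·cα·cβ·cγ = cβ²·(a²+b²−c²) − cγ²·(a²+c²−b²). -/
theorem p3p_point_sharing_forces_cos_alpha_relation
    (a b c cα cβ cγ u₀ v₀ : ℝ)
    (ha : 0 < a) (hb : 0 < b) (hc : 0 < c)
    (hu₀ : 0 < u₀) (hv₀ : 0 < v₀)
    (hC1 : (a^2 - b^2) * v₀^2 + 2 * b^2 * cα * u₀ * v₀ - b^2 * u₀^2
            - 2 * a^2 * cβ * v₀ + a^2 = 0)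
    (hC2 : (a^2 - c^2) * u₀^2 + 2 * c^2 * cα * u₀ * v₀ - c^2 * v₀^2
            - 2 * a^2 * cγ * u₀ + a^2 = 0)
    (hline : (a^2 + b^2 - c^2) * cβ * u₀ + (a^2 + c^2 - b^2) * cγ * v₀
      = 2 * a^2 * cβ * cγ) :
    2 * (b^2 - c^2) * cα * cβ * cγ
      = cβ^2 * (a^2 + b^2 - c^2) - cγ^2 * (a^2 + c^2 - b^2) := by
  have hm : (4 * a^4 * u₀^2 * v₀^2 : ℝ) ≠ 0 := by positivity
  refine mul_left_cancel₀ hm ?_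
  linear_combination
    (- 1*c^4*v₀^4 - 1*c^4*u₀^2*v₀^2 + 2*c^4*cα*u₀*v₀^3 + 1*b^2*c^2*v₀^4
      + 1*b^2*c^2*u₀^2*v₀^2 - 2*b^2*c^2*cα*u₀*v₀^3 + 1*a^2*c^2*v₀^2
      - 1*a^2*c^2*v₀^4 - 2*a^2*c^2*cβ*u₀^2*v₀ + 2*a^2*c^2*cα*u₀*v₀^3
      - 1*a^2*b^2*v₀^2 - 1*a^2*b^2*u₀^2*v₀^2 + 2*a^2*b^2*cβ*u₀^2*v₀
      + 1*a^4*v₀^2 + 1*a^4*u₀^2*v₀^2 + 2*a^4*cβ*u₀^2*v₀) * hC1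
    + (1*b^2*c^2*v₀^4 + 1*b^2*c^2*u₀^2*v₀^2 - 2*b^2*c^2*cα*u₀*v₀^3
      - 1*b^4*v₀^4 - 1*b^4*u₀^2*v₀^2 + 2*b^4*cα*u₀*v₀^3 - 1*a^2*c^2*v₀^2
      - 1*a^2*c^2*v₀^4 - 2*a^2*c^2*cγ*u₀*v₀^2 + 2*a^2*c^2*cβ*v₀^3
      + 2*a^2*c^2*cβ*u₀^2*v₀ + 1*a^2*b^2*v₀^2 + 2*a^2*b^2*v₀^4
      + 1*a^2*b^2*u₀^2*v₀^2 + 2*a^2*b^2*cγ*u₀*v₀^2 - 2*a^2*b^2*cβ*v₀^3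
      - 2*a^2*b^2*cβ*u₀^2*v₀ - 2*a^2*b^2*cα*u₀*v₀^3 - 1*a^4*v₀^2
      - 1*a^4*v₀^4 - 2*a^4*cγ*u₀*v₀^2 + 2*a^4*cβ*v₀^3
      - 2*a^4*cβ*u₀^2*v₀) * hC2
    + (- 2*a^2*c^2*u₀*v₀^3 - 2*a^2*c^2*u₀^3*v₀ + 4*a^2*c^2*cα*u₀^2*v₀^2
      + 2*a^2*b^2*u₀*v₀^3 + 2*a^2*b^2*u₀^3*v₀ - 4*a^2*b^2*cα*u₀^2*v₀^2
      - 2*a^4*u₀*v₀^3 + 2*a^4*u₀^3*v₀) * hline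
end

section
/- (Theorem 9, part II: companion of a point-sharing pair.) Let a, b, c > 0 and cα, cβ, cγ ∈ ℝ with cβ ≠ 0 and cγ ≠ 0. Suppose there exists (u₁, v₁) with u₁ > 0, v₁ > 0 satisfying both conic equations C1(u₁,v₁) = 0 and C2(u₁,v₁) = 0 and lying on the point-sharing line (a²+b²−c²)·cβ·u₁ + (a²+c²−b²)·cγ·v₁ = 2a²·cβ·cγ. Then every (u, v) with u > 0, v > 0 satisfying C1(u,v) = 0 and C2(u,v) = 0 lies either on the side-sharing line cγ·u − cβ·v = 0 or on the point-sharing line (a²+b²−c²)·cβ·u + (a²+c²−b²)·cγ·v = 2a²·cβ·cγ. Hence, given a pair of point-sharing solutions of the P3P problem, any remaining solutions not on the point-sharing line must lie on the side-sharing line. -/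
/-- Theorem 9, part II: companion of a point-sharing pair: if
some positive intersection point of the two characteristic conics lies on the
point-sharing line, then every positive intersection point lies on the
side-sharing line or on the point-sharing line. -/
theorem p3p_point_sharing_companion
    (a b c cα cβ cγ u₁ v₁ : ℝ)
    (ha : 0 < a) (hb : 0 < b) (hc : 0 < c)
    (hcβ : cβ ≠ 0) (hcγ : cγ ≠ 0)
    (hu₁ : 0 < u₁) (hv₁ : 0 < v₁)
    (hC1₁ : (a^2 - b^2) * v₁^2 + 2 * b^2 * cα * u₁ * v₁ - b^2 * u₁^2
            - 2 * a^2 * cβ * v₁ + a^2 = 0)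
    (hC2₁ : (a^2 - c^2) * u₁^2 + 2 * c^2 * cα * u₁ * v₁ - c^2 * v₁^2
            - 2 * a^2 * cγ * u₁ + a^2 = 0)
    (hline₁ : (a^2 + b^2 - c^2) * cβ * u₁ + (a^2 + c^2 - b^2) * cγ * v₁
      = 2 * a^2 * cβ * cγ) :
    ∀ u v : ℝ, 0 < u → 0 < v →
      (a^2 - b^2) * v^2 + 2 * b^2 * cα * u * v - b^2 * u^2
        - 2 * a^2 * cβ * v + a^2 = 0 →
      (a^2 - c^2) * u^2 + 2 * c^2 * cα * u * v - c^2 * v^2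
        - 2 * a^2 * cγ * u + a^2 = 0 →
      cγ * u - cβ * v = 0 ∨
      (a^2 + b^2 - c^2) * cβ * u + (a^2 + c^2 - b^2) * cγ * v
        = 2 * a^2 * cβ * cγ := by
  intro u v hu hv hC1 hC2
  have hT : 2*cα*(b^2-c^2)*cβ*cγ - cβ^2*(a^2+b^2-c^2) + cγ^2*(a^2+c^2-b^2) = 0 := by
    have h1 : (2*cα*(b^2-c^2)*cβ*cγ - cβ^2*(a^2+b^2-c^2) + cγ^2*(a^2+c^2-b^2))
        * (u₁*v₁) = 0 := by
      linear_combination (cβ*cγ) * hC1₁ - (cβ*cγ) * hC2₁ + (cγ*u₁ - cβ*v₁) * hline₁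
    rcases mul_eq_zero.mp h1 with h | h
    · exact h
    · exact absurd h (by positivity)
  have hprod : (cγ*u - cβ*v) *
      ((a^2+b^2-c^2)*cβ*u + (a^2+c^2-b^2)*cγ*v - 2*a^2*cβ*cγ) = 0 := by
    linear_combination (u*v)*hT - (cβ*cγ)*hC1 + (cβ*cγ)*hC2
  rcases mul_eq_zero.mp hprod with h | h
  · exact Or.inl h
  · exact Or.inr (by linarith)
end
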